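/- For every arena A over a countable vertex set equipped with a coloring function c : V → {0,...,d}, Eve has a finite-memory strategy using at most ℓ+1 memory states that is winning from every vertex of her winning set W_E(FinParity(c)) for the finitary parity condition FinParity(c), where ℓ is the number of odd colors in {0,...,d}. -/

import Mathlib

open Filter Set

/-- An arena: a directed graph on vertex set `V` with no dead-ends, together with
the set `eve` of vertices controlled by Eve (the rest are controlled by Adam). -/
structure Arena (V : Type) where
  eve : Set V
  edge : V → V → Prop
  succ : ∀ v, ∃ w, edge v w

namespace GameDefs

variable {V : Type}

/-- An infinite play: an infinite path in the arena. -/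
def IsPlay (A : Arena V) (π : ℕ → V) : Prop := ∀ k, A.edge (π k) (π (k + 1))

/-- The (strict) history of a play before time `k`. -/
def hist (π : ℕ → V) (k : ℕ) : List V := (List.range k).map π

/-- A general (history-dependent) strategy for Eve. -/
structure EveStrategy (A : Arena V) where
  move : List V → V → V
  legal : ∀ h v, v ∈ A.eve → A.edge v (move h v)

def EveConsistent (A : Arena V) (σ : EveStrategy A) (π : ℕ → V) : Prop :=
  ∀ k, π k ∈ A.eve → π (k + 1) = σ.move (hist π k) (π k)

def EveWinsFrom (A : Arena V) (σ : EveStrategy A) (Ω : Set (ℕ → V)) (v : V) : Prop :=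
  ∀ π, IsPlay A π → π 0 = v → EveConsistent A σ π → π ∈ Ω

/-- Eve's winning region. -/
def WE (A : Arena V) (Ω : Set (ℕ → V)) : Set V :=
  {v | ∃ σ : EveStrategy A, EveWinsFrom A σ Ω v}

/-- A general (history-dependent) strategy for Adam. -/
structure AdamStrategy (A : Arena V) where
  move : List V → V → V
  legal : ∀ h v, v ∉ A.eve → A.edge v (move h v)

def AdamConsistent (A : Arena V) (τ : AdamStrategy A) (π : ℕ → V) : Prop :=
  ∀ k, π k ∉ A.eve → π (k + 1) = τ.move (hist π k) (π k)

def AdamWinsFrom (A : Arena V) (τ : AdamStrategy A) (Ω : Set (ℕ → V)) (v : V) : Prop :=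
  ∀ π, IsPlay A π → π 0 = v → AdamConsistent A τ π → π ∉ Ω

/-- Adam's winning region. -/
def WA (A : Arena V) (Ω : Set (ℕ → V)) : Set V :=
  {v | ∃ τ : AdamStrategy A, AdamWinsFrom A τ Ω v}

/-- A positional (memoryless) strategy for Eve. -/
structure PosStrategy (A : Arena V) where
  move : V → V
  legal : ∀ v, v ∈ A.eve → A.edge v (move v)

def PosConsistent (A : Arena V) (σ : PosStrategy A) (π : ℕ → V) : Prop :=
  ∀ k, π k ∈ A.eve → π (k + 1) = σ.move (π k)

def PosWinsFrom (A : Arena V) (σ : PosStrategy A) (Ω : Set (ℕ → V)) (v : V) : Prop :=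
  ∀ π, IsPlay A π → π 0 = v → PosConsistent A σ π → π ∈ Ω

/-- A memory structure: memory states, initial state, and update function on edges. -/
structure Memory (V : Type) where
  M : Type
  m0 : M
  upd : M → V → V → M

/-- The sequence of memory states along a play. -/
def memRun (Mem : Memory V) (π : ℕ → V) : ℕ → Mem.M
  | 0 => Mem.m0
  | k + 1 => Mem.upd (memRun Mem π k) (π k) (π (k + 1))

/-- A strategy for Eve using the memory structure `Mem`, given by a next-move function. -/
structure EveMemStrategy (A : Arena V) (Mem : Memory V) where
  move : V → Mem.M → V
  legal : ∀ v m, v ∈ A.eve → A.edge v (move v m)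

def EveMemConsistent (A : Arena V) (Mem : Memory V) (σ : EveMemStrategy A Mem)
    (π : ℕ → V) : Prop :=
  ∀ k, π k ∈ A.eve → π (k + 1) = σ.move (π k) (memRun Mem π k)

def EveMemWinsFrom (A : Arena V) (Mem : Memory V) (σ : EveMemStrategy A Mem)
    (Ω : Set (ℕ → V)) (v : V) : Prop :=
  ∀ π, IsPlay A π → π 0 = v → EveMemConsistent A Mem σ π → π ∈ Ω

/-- A strategy for Adam using the memory structure `Mem`, given by a next-move function. -/
structure AdamMemStrategy (A : Arena V) (Mem : Memory V) where
  move : V → Mem.M → V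
  legal : ∀ v m, v ∉ A.eve → A.edge v (move v m)

def AdamMemConsistent (A : Arena V) (Mem : Memory V) (τ : AdamMemStrategy A Mem)
    (π : ℕ → V) : Prop :=
  ∀ k, π k ∉ A.eve → π (k + 1) = τ.move (π k) (memRun Mem π k)

def AdamMemWinsFrom (A : Arena V) (Mem : Memory V) (τ : AdamMemStrategy A Mem)
    (Ω : Set (ℕ → V)) (v : V) : Prop :=
  ∀ π, IsPlay A π → π 0 = v → AdamMemConsistent A Mem τ π → π ∉ Ω

/-- A condition is prefix-independent if it is closed under adding and removing prefixes. -/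
def PrefixIndependent (Ω : Set (ℕ → V)) : Prop :=
  ∀ π : ℕ → V, π ∈ Ω ↔ (fun k => π (k + 1)) ∈ Ω

/-- A condition is Borel if it is a Borel subset of `V^ω` for the product topology,
where `V` carries the discrete topology. -/
def IsBorelCondition (Ω : Set (ℕ → V)) : Prop :=
  letI : TopologicalSpace V := ⊥
  @MeasurableSet (ℕ → V) (borel (ℕ → V)) Ω

/-- `distB π F k` is the number of steps from position `k` to the next visit of `F`
(`⊤` if `F` is never visited again). -/
noncomputable def distB (π : ℕ → V) (F : Set V) (k : ℕ) : ℕ∞ :=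
  sInf ((fun j : ℕ => (j : ℕ∞)) '' {j | π (k + j) ∈ F})

/-- `distC π c k`: number of steps from position `k` to the next position whose
color is even and at most the color at position `k`. -/
noncomputable def distC (π : ℕ → V) (c : V → ℕ) (k : ℕ) : ℕ∞ :=
  sInf ((fun j : ℕ => (j : ℕ∞)) '' {j | Even (c (π (k + j))) ∧ c (π (k + j)) ≤ c (π k)})

/-- Bounded uniform Büchi condition with bound `N`: `sup_k dist_k(π,F) ≤ N`. -/
def BndBuchi (F : Set V) (N : ℕ) : Set (ℕ → V) :=
  {π | ∀ k, distB π F k ≤ (N : ℕ∞)}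

/-- Uniform Büchi condition with bound `N`: `limsup_k dist_k(π,F) ≤ N`. -/
def UnifBuchi (F : Set V) (N : ℕ) : Set (ℕ → V) :=
  {π | Filter.limsup (fun k => distB π F k) Filter.atTop ≤ (N : ℕ∞)}

/-- Finitary Büchi condition: `limsup_k dist_k(π,F) < ∞`. -/
def FinBuchi (F : Set V) : Set (ℕ → V) :=
  {π | Filter.limsup (fun k => distB π F k) Filter.atTop < ⊤}

/-- Classical Büchi condition: `F` is visited infinitely often. -/
def BuchiCond (F : Set V) : Set (ℕ → V) :=
  {π | ∀ k, ∃ j, k ≤ j ∧ π j ∈ F}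

/-- Bounded parity condition: `sup_k dist_k(π,c) < ∞`. -/
def BndParity (c : V → ℕ) : Set (ℕ → V) :=
  {π | (⨆ k, distC π c k) < ⊤}

/-- Finitary parity condition: `limsup_k dist_k(π,c) < ∞`. -/
def FinParity (c : V → ℕ) : Set (ℕ → V) :=
  {π | Filter.limsup (fun k => distC π c k) Filter.atTop < ⊤}

/-- One-step predecessor operator for Eve. -/
def Pre (A : Arena V) (X : Set V) : Set V :=
  {u | (u ∈ A.eve ∧ ∃ v, A.edge u v ∧ v ∈ X) ∨ (u ∉ A.eve ∧ ∀ v, A.edge u v → v ∈ X)}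

/-- Bounded attractor: `AttrE A k X` is the `k`-step attractor of `X` for Eve. -/
def AttrE (A : Arena V) : ℕ → Set V → Set V
  | 0, X => X
  | k + 1, X => AttrE A k X ∪ Pre A (AttrE A k X)

theorem Pre_mono (A : Arena V) : Monotone (Pre A) := by
  intro X Y h u hu
  simp only [Pre, Set.mem_setOf_eq] at hu ⊢
  rcases hu with ⟨he, v, hv, hvX⟩ | ⟨ha, hall⟩
  · exact Or.inl ⟨he, v, hv, h hvX⟩
  · exact Or.inr ⟨ha, fun v hv => h (hall v hv)⟩

theorem AttrE_mono (A : Arena V) (N : ℕ) : Monotone (AttrE A N) := by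
  induction N with
  | zero => intro X Y h; exact h
  | succ n ih =>
      intro X Y h
      exact Set.union_subset_union (ih h) (Pre_mono A (ih h))

end GameDefs


namespace Stmt15Aux

open GameDefs Classical

noncomputable section

variable {V : Type}

/-! ### Memory states -/

variable (d : ℕ)

/-- Odd colors. -/
abbrev OddCol : Type := {q : ℕ // q ∈ (Finset.range (d + 1)).filter (fun m => Odd m)}

/-- Memory: an odd color (minimal pending request) or `none`. -/
abbrev Mst : Type := Option (OddCol d)

lemma card_Mst :
    Nat.card (Mst d) = ((Finset.range (d + 1)).filter (fun m => Odd m)).card + 1 := by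
  rw [Nat.card_eq_fintype_card, Fintype.card_option, Fintype.card_coe]

/-- Numerical value of a memory state (`none` ↦ `d+1`). -/
def mval : Mst d → ℕ := fun m => m.elim (d + 1) (fun q => q.1)

variable {d}

lemma mval_le_d (q : OddCol d) : (q : ℕ) ≤ d := by
  have := q.2
  simp only [Finset.mem_filter, Finset.mem_range] at this
  omega

lemma mval_none_of_ge {m : Mst d} (h : d + 1 ≤ mval d m) : m = none := by
  cases m with
  | none => rfl
  | some q => exfalso; have := mval_le_d q; simp [mval] at h; omega

lemma mval_inj {m m' : Mst d} (h : mval d m = mval d m') : m = m' := by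
  cases m with
  | none => cases m' with
    | none => rfl
    | some q => have := mval_le_d q; simp [mval] at h; omega
  | some q => cases m' with
    | none => have := mval_le_d q; simp [mval] at h; omega
    | some q' => simp [mval] at h; exact congrArg some h

variable (d) in
lemma mval_le_none (m : Mst d) : mval d m ≤ d + 1 := by
  cases m with
  | none => simp [mval]
  | some q => have := mval_le_d q; simp [mval]; omega

section WithColoring

variable (d : ℕ) (c : V → ℕ) (hc : ∀ v, c v ≤ d)

/-- The odd color of a vertex of odd color. -/
def oddColOf (w : V) (h : Odd (c w)) : OddCol d :=
  ⟨c w, by simp only [Finset.mem_filter, Finset.mem_range]; exact ⟨by have := hc w; omega, h⟩⟩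

lemma oddColOf_val (w : V) (h : Odd (c w)) : (oddColOf d c hc w h : ℕ) = c w := rfl

/-- The pending-request update: on an odd color take the min with the pending request,
on an even color reset to `none` if it answers the pending request. -/
def pstep (m : Mst d) (w : V) : Mst d :=
  if h : Odd (c w) then
    match m with
    | none => some (oddColOf d c hc w h)
    | some p => if c w < (p : ℕ) then some (oddColOf d c hc w h) else some p
  else
    match m with
    | none => none
    | some p => if c w ≤ (p : ℕ) then none else some p

/-- Fresh memory state when (re)starting at a vertex. -/
def fresh (w : V) : Mst d := pstep d c hc none w

variable {d c}

lemma pstep_odd {m : Mst d} {w : V} (h : Odd (c w)) :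
    ∃ p : OddCol d, pstep d c hc m w = some p ∧ (p : ℕ) ≤ c w ∧ (p : ℕ) ≤ mval d m := by
  cases m with
  | none =>
    refine ⟨oddColOf d c hc w h, by simp [pstep, h], le_refl _, ?_⟩
    rw [oddColOf_val]; have := hc w; simp [mval]; omega
  | some p =>
    by_cases hlt : c w < (p : ℕ)
    · refine ⟨oddColOf d c hc w h, by simp [pstep, h, hlt], le_refl _, ?_⟩
      rw [oddColOf_val]; simp [mval]; omega
    · exact ⟨p, by simp [pstep, h, hlt], by omega, by simp [mval]⟩

lemma pstep_none_eq {m : Mst d} {w : V} (h : pstep d c hc m w = none) :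
    ¬ Odd (c w) ∧ ∀ p : OddCol d, m = some p → c w ≤ (p : ℕ) := by
  by_cases ho : Odd (c w)
  · obtain ⟨p, hp, -⟩ := pstep_odd hc (m := m) ho; rw [hp] at h; exact absurd h (by simp)
  · refine ⟨ho, fun p hm => ?_⟩
    subst hm
    simp only [pstep, ho, dif_neg, not_false_iff] at h
    by_cases hle : c w ≤ (p : ℕ)
    · exact hle
    · simp [hle] at h

lemma pstep_even_none {p : OddCol d} {w : V} (h1 : ¬ Odd (c w)) (h2 : c w ≤ (p : ℕ)) :
    pstep d c hc (some p) w = none := by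
  simp [pstep, h1, h2]

/-- if the result isn't `none`, `mval` does not increase. -/
lemma mval_pstep_le {m : Mst d} {w : V} (h : pstep d c hc m w ≠ none) :
    mval d (pstep d c hc m w) ≤ mval d m := by
  by_cases ho : Odd (c w)
  · obtain ⟨p, hp, -, hle⟩ := pstep_odd hc (m := m) ho
    rw [hp]; simpa [mval] using hle
  · cases m with
    | none => simp [pstep, ho]
    | some p =>
      by_cases hle : c w ≤ (p : ℕ)
      · exact absurd (pstep_even_none hc ho hle) h
      · simp [pstep, ho, hle, mval]

/-- a change of memory state to `some p` means `p` was just requested. -/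
lemma pstep_change {m : Mst d} {w : V} {p : OddCol d}
    (h : pstep d c hc m w = some p) (hne : m ≠ some p) : c w = (p : ℕ) := by
  by_cases ho : Odd (c w)
  · cases m with
    | none => simp only [pstep, ho, dif_pos] at h
              cases h; rfl
    | some q =>
      by_cases hlt : c w < (q : ℕ)
      · simp only [pstep, ho, dif_pos, if_pos hlt] at h; cases h; rfl
      · simp only [pstep, ho, dif_pos, if_neg hlt] at h; exact absurd h.symm (fun hh => hne hh.symm)
  · cases m with
    | none => simp [pstep, ho] at h
    | some q =>
      by_cases hle : c w ≤ (q : ℕ)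
      · simp [pstep, ho, hle] at h
      · simp only [pstep, ho, if_neg hle] at h
        exact absurd h.symm (fun hh => hne hh.symm)

/-- while the memory is constantly `some p`, no position answers `p`. -/
lemma pstep_const {p : OddCol d} {w : V} (h : pstep d c hc (some p) w = some p) :
    ¬ (Even (c w) ∧ c w ≤ (p : ℕ)) := by
  rintro ⟨he, hle⟩
  have ho : ¬ Odd (c w) := (Nat.not_odd_iff_even).mpr he
  rw [pstep_even_none hc ho hle] at h
  exact absurd h (by simp)

/-- monotonicity of `pstep` in the memory value. -/
lemma pstep_mono {m m' : Mst d} {w : V} (h : mval d m ≤ mval d m') :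
    mval d (pstep d c hc m w) ≤ mval d (pstep d c hc m' w) := by
  by_cases ho : Odd (c w)
  · obtain ⟨p, hp, hp1, hp2⟩ := pstep_odd hc (m := m) ho
    obtain ⟨p', hp', hp'1, hp'2⟩ := pstep_odd hc (m := m') ho
    have e2 : c w ≤ (p' : ℕ) ∨ mval d m' ≤ (p' : ℕ) := by
      cases m' with
      | none =>
        simp only [pstep, ho, dif_pos] at hp'
        cases hp'; left; rw [oddColOf_val]
      | some q =>
        by_cases hlt : c w < (q : ℕ)
        · simp only [pstep, ho, dif_pos, if_pos hlt] at hp'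
          cases hp'; left; rw [oddColOf_val]
        · simp only [pstep, ho, dif_pos, if_neg hlt] at hp'
          cases hp'; right; simp [mval]
    rw [hp, hp']
    simp only [mval, Option.elim]
    rcases e2 with h2 | h2 <;> omega
  · cases m with
    | none =>
      cases m' with
      | none => simp [pstep, ho]
      | some q => have := mval_le_d q; simp [mval] at h; omega
    | some q =>
      cases m' with
      | none =>
        simp only [pstep, ho]
        by_cases hle : c w ≤ (q : ℕ)
        · simp only [if_pos hle]; simp [mval]
        · simp only [if_neg hle]; have := mval_le_d q; simp [mval]; omega
      | some q' =>
        simp only [mval, Option.elim] at h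
        by_cases hle : c w ≤ (q : ℕ)
        · have hle' : c w ≤ (q' : ℕ) := le_trans hle h
          simp [pstep, ho, hle, hle']
        · have hq : pstep d c hc (some q) w = some q := by simp [pstep, ho, hle]
          by_cases hle' : c w ≤ (q' : ℕ)
          · rw [hq, pstep_even_none hc ho hle']
            have := mval_le_d q
            simp only [mval, Option.elim]; omega
          · have hq' : pstep d c hc (some q') w = some q' := by simp [pstep, ho, hle']
            rw [hq, hq']
            simp only [mval, Option.elim]; omega


/-! ### Product arena and fixpoint operators -/

variable (d c) (A : Arena V)

/-- The product arena of `A` with the memory structure. -/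
def prodArena : Arena (V × Mst d) where
  eve := {s | s.1 ∈ A.eve}
  edge := fun s s' => A.edge s.1 s'.1 ∧ s'.2 = pstep d c hc s.2 s'.1
  succ := fun s => by
    obtain ⟨w, hw⟩ := A.succ s.1
    exact ⟨(w, pstep d c hc s.2 w), hw, rfl⟩

local notation "PA" => prodArena d c hc A

/-- Reset states. -/
def Fset : Set (V × Mst d) := {s | s.2 = none}

/-- Target of the inner attractor. -/
def Tgt (X : Set V) (Y : Set (V × Mst d)) : Set (V × Mst d) :=
  (Fset d ∩ Pre PA Y) ∪ {s | s.1 ∈ X}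

lemma Tgt_mono (X : Set V) : Monotone (Tgt d c hc A X) := fun Y Y' h =>
  Set.union_subset_union
    (Set.inter_subset_inter (le_refl _) (Pre_mono _ h)) (le_refl _)

/-- The inner operator. -/
def Phi (N : ℕ) (X : Set V) : Set (V × Mst d) →o Set (V × Mst d) :=
  ⟨fun Y => AttrE PA N (Tgt d c hc A X Y),
   fun Y Y' h => AttrE_mono _ N (Tgt_mono d c hc A X h)⟩

/-- The inner greatest fixpoint. -/
def Yg (N : ℕ) (X : Set V) : Set (V × Mst d) := OrderHom.gfp (Phi d c hc A N X)

lemma Yg_fix (N : ℕ) (X : Set V) :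
    Yg d c hc A N X = AttrE PA N (Tgt d c hc A X (Yg d c hc A N X)) :=
  (OrderHom.map_gfp (Phi d c hc A N X)).symm

/-! ### Misc attractor lemmas -/

lemma subset_attrE (B : Arena V) (k : ℕ) (X : Set V) : X ⊆ AttrE B k X := by
  induction k with
  | zero => exact le_refl _
  | succ n ih => exact le_trans ih Set.subset_union_left

lemma attrE_steps_mono (B : Arena V) {k k' : ℕ} (h : k ≤ k') (X : Set V) :
    AttrE B k X ⊆ AttrE B k' X := by
  induction k' with
  | zero => obtain rfl : k = 0 := Nat.le_zero.mp h; exact le_refl _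
  | succ n ih =>
    rcases Nat.le_succ_iff.mp h with h' | rfl
    · exact le_trans (ih h') Set.subset_union_left
    · exact le_refl _

/-! ### Upward closure in the memory component -/

/-- Upward closure of a set of product states. -/
def UpSet (Y : Set (V × Mst d)) : Set (V × Mst d) :=
  {s | ∃ m : Mst d, mval d m ≤ mval d s.2 ∧ (s.1, m) ∈ Y}

lemma up_attr (X : Set V) (Y : Set (V × Mst d)) (k : ℕ) :
    ∀ v (m m' : Mst d), mval d m ≤ mval d m' →
      (v, m) ∈ AttrE PA k (Tgt d c hc A X Y) →
      (v, m') ∈ AttrE PA k (Tgt d c hc A X (UpSet d Y)) := by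
  induction k with
  | zero =>
    intro v m m' hval h
    rcases h with ⟨hF, hPre⟩ | hX
    · have hmn : m = none := hF
      have hm' : m' = none := by
        refine mval_none_of_ge ?_
        have h1 : mval d m = d + 1 := by rw [hmn]; rfl
        omega
      refine Or.inl ⟨hm', ?_⟩
      rcases hPre with ⟨he, ⟨w, mw⟩, ⟨hedge, hmw⟩, hY⟩ | ⟨ha, hall⟩
      · exact Or.inl ⟨he, (w, pstep d c hc m' w), ⟨hedge, rfl⟩,
          ⟨pstep d c hc m w, pstep_mono hc hval, by rw [← hmw]; exact hY⟩⟩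
      · refine Or.inr ⟨ha, ?_⟩
        rintro ⟨w, mw'⟩ ⟨hedge, hmw'⟩
        exact ⟨pstep d c hc m w, by rw [hmw']; exact pstep_mono hc hval,
          hall (w, pstep d c hc m w) ⟨hedge, rfl⟩⟩
    · exact Or.inr hX
  | succ n ih =>
    intro v m m' hval h
    rcases h with h | hPre
    · exact Or.inl (ih v m m' hval h)
    · refine Or.inr ?_
      rcases hPre with ⟨he, ⟨w, mw⟩, ⟨hedge, hmw⟩, hY⟩ | ⟨ha, hall⟩
      · exact Or.inl ⟨he, (w, pstep d c hc m' w), ⟨hedge, rfl⟩,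
          ih w (pstep d c hc m w) _ (pstep_mono hc hval) (by rw [← hmw]; exact hY)⟩
      · refine Or.inr ⟨ha, ?_⟩
        rintro ⟨w, mw'⟩ ⟨hedge, hmw'⟩
        rw [show mw' = pstep d c hc m' w from hmw']
        exact ih w (pstep d c hc m w) _ (pstep_mono hc hval)
          (hall (w, pstep d c hc m w) ⟨hedge, rfl⟩)

lemma Yg_up {N : ℕ} {X : Set V} {v : V} {m m' : Mst d} (hval : mval d m ≤ mval d m')
    (h : (v, m) ∈ Yg d c hc A N X) : (v, m') ∈ Yg d c hc A N X := by
  have hsub : UpSet d (Yg d c hc A N X) ≤ Phi d c hc A N X (UpSet d (Yg d c hc A N X)) := by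
    rintro ⟨u, mu⟩ ⟨m0, hm0, hmem⟩
    rw [Yg_fix] at hmem
    exact up_attr d c hc A X _ N u m0 mu hm0 hmem
  have h2 : UpSet d (Yg d c hc A N X) ≤ Yg d c hc A N X := OrderHom.le_gfp _ hsub
  exact h2 ⟨m, hval, h⟩

/-- `Yg` is monotone in the bound. -/
lemma Yg_mono_N {N N' : ℕ} (h : N ≤ N') (X : Set V) :
    Yg d c hc A N X ⊆ Yg d c hc A N' X := by
  have hsub : Yg d c hc A N X ≤ Phi d c hc A N' X (Yg d c hc A N X) := by
    intro s hs
    rw [Yg_fix] at hs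
    exact attrE_steps_mono _ h _ hs
  exact OrderHom.le_gfp _ hsub

/-- `Yg` is monotone in the outer stage. -/
lemma Yg_mono_X (N : ℕ) {X X' : Set V} (h : X ⊆ X') :
    Yg d c hc A N X ⊆ Yg d c hc A N X' := by
  have hsub : Yg d c hc A N X ≤ Phi d c hc A N X' (Yg d c hc A N X) := by
    intro s hs
    rw [Yg_fix] at hs
    refine AttrE_mono _ N ?_ hs
    exact Set.union_subset_union (le_refl _) (fun u hu => h hu)
  exact OrderHom.le_gfp _ hsub

/-! ### Outer least fixpoint -/

/-- The outer operator. -/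
def Theta : Set V →o Set V :=
  ⟨fun X => {v | ∃ N, (v, fresh d c hc v) ∈ Yg d c hc A N X},
   fun X X' h v => by rintro ⟨N, hN⟩; exact ⟨N, Yg_mono_X d c hc A N h hN⟩⟩

/-- The winning region. -/
def Zreg : Set V := OrderHom.lfp (Theta d c hc A)

lemma Theta_Z : Theta d c hc A (Zreg d c hc A) = Zreg d c hc A :=
  OrderHom.map_lfp _

/-- Outer ordinal approximation. -/
def Xa (β : Ordinal) : Set V := OrdinalApprox.lfpApprox (Theta d c hc A) ⊥ β

lemma mem_Xa_iff {β : Ordinal} {v : V} :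
    v ∈ Xa d c hc A β ↔ ∃ γ, γ < β ∧ v ∈ Theta d c hc A (Xa d c hc A γ) := by
  constructor
  · intro h
    rw [Xa, OrdinalApprox.lfpApprox] at h
    rcases h with h | h
    · exact absurd h (by simp [Set.bot_eq_empty])
    · simp only [Set.iSup_eq_iUnion, Set.mem_iUnion] at h
      obtain ⟨γ, hγ, hvt⟩ := h
      exact ⟨γ, hγ, hvt⟩
  · rintro ⟨γ, hγ, hv⟩
    rw [Xa, OrdinalApprox.lfpApprox]
    right; simp only [Set.iSup_eq_iUnion, Set.mem_iUnion]; exact ⟨γ, hγ, hv⟩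

lemma Xa_subset_Z (β : Ordinal) : Xa d c hc A β ⊆ Zreg d c hc A :=
  OrdinalApprox.lfpApprox_le_of_mem_fixedPoints _
    (OrderHom.isFixedPt_lfp _) bot_le β

lemma Z_subset_exists_stage {v : V} (hv : v ∈ Zreg d c hc A) :
    ∃ β, v ∈ Theta d c hc A (Xa d c hc A β) := by
  have : v ∈ Xa d c hc A ((Order.succ (Cardinal.mk (Set V))).ord) := by
    rw [Xa, OrdinalApprox.lfpApprox_ord_eq_lfp]; exact hv
  rw [mem_Xa_iff] at this
  obtain ⟨γ, _, h⟩ := this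
  exact ⟨γ, h⟩

/-- The minimal outer stage of a vertex of `Z`. -/
def alph (v : V) : Ordinal := sInf {β | v ∈ Theta d c hc A (Xa d c hc A β)}

lemma alph_mem {v : V} (hv : v ∈ Zreg d c hc A) :
    v ∈ Theta d c hc A (Xa d c hc A (alph d c hc A v)) :=
  csInf_mem (Z_subset_exists_stage d c hc A hv)

lemma alph_min {v : V} {β : Ordinal} (h : v ∈ Theta d c hc A (Xa d c hc A β)) :
    alph d c hc A v ≤ β :=
  csInf_le (OrderBot.bddBelow _) h

lemma not_mem_Xa_alph {v : V} (hv : v ∈ Zreg d c hc A) :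
    v ∉ Xa d c hc A (alph d c hc A v) := by
  intro h
  rw [mem_Xa_iff] at h
  obtain ⟨γ, hγ, h⟩ := h
  exact absurd (alph_min d c hc A h) (not_le.mpr hγ)

/-- The minimal inner bound of a vertex of `Z`. -/
def Nb {v : V} (hv : v ∈ Zreg d c hc A) : ℕ :=
  Nat.find (alph_mem d c hc A hv : ∃ N, _)

lemma Nb_spec {v : V} (hv : v ∈ Zreg d c hc A) :
    (v, fresh d c hc v) ∈ Yg d c hc A (Nb d c hc A hv) (Xa d c hc A (alph d c hc A v)) :=
  Nat.find_spec (alph_mem d c hc A hv : ∃ N, _)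

lemma Nb_min {v : V} (hv : v ∈ Zreg d c hc A) {N : ℕ}
    (h : (v, fresh d c hc v) ∈ Yg d c hc A N (Xa d c hc A (alph d c hc A v))) :
    Nb d c hc A hv ≤ N :=
  Nat.find_le h


/-! ### The strategy -/

/-- Current certificate region of a vertex of `Z`. -/
def Ycur {v : V} (_hv : v ∈ Zreg d c hc A) : Set (V × Mst d) :=
  Yg d c hc A (Nb d c hc A _hv) (Xa d c hc A (alph d c hc A v))

/-- Current attractor target. -/
def Tcur {v : V} (hv : v ∈ Zreg d c hc A) : Set (V × Mst d) :=
  Tgt d c hc A (Xa d c hc A (alph d c hc A v)) (Ycur d c hc A hv)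

lemma Ycur_eq {v : V} (hv : v ∈ Zreg d c hc A) :
    Ycur d c hc A hv = AttrE PA (Nb d c hc A hv) (Tcur d c hc A hv) :=
  Yg_fix d c hc A _ _

lemma fresh_mem_Ycur {v : V} (hv : v ∈ Zreg d c hc A) :
    (v, fresh d c hc v) ∈ Ycur d c hc A hv :=
  Nb_spec d c hc A hv

/-- Rank within the current attractor. -/
def rnk {v : V} (hv : v ∈ Zreg d c hc A) (s : V × Mst d) : ℕ :=
  if h : ∃ k, s ∈ AttrE PA k (Tcur d c hc A hv) then Nat.find h else 0

lemma rnk_exists {v : V} {m : Mst d} (hv : v ∈ Zreg d c hc A)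
    (hm : (v, m) ∈ Ycur d c hc A hv) :
    ∃ k, (v, m) ∈ AttrE PA k (Tcur d c hc A hv) :=
  ⟨Nb d c hc A hv, by rw [← Ycur_eq]; exact hm⟩

lemma rnk_spec {v : V} {m : Mst d} (hv : v ∈ Zreg d c hc A)
    (hm : (v, m) ∈ Ycur d c hc A hv) :
    (v, m) ∈ AttrE PA (rnk d c hc A hv (v, m)) (Tcur d c hc A hv) := by
  rw [rnk, dif_pos (rnk_exists d c hc A hv hm)]
  exact Nat.find_spec (rnk_exists d c hc A hv hm)

lemma rnk_min {v : V} (hv : v ∈ Zreg d c hc A) {s : V × Mst d} {k : ℕ}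
    (h : s ∈ AttrE PA k (Tcur d c hc A hv)) : rnk d c hc A hv s ≤ k := by
  rw [rnk, dif_pos ⟨k, h⟩]
  exact Nat.find_le h

lemma rnk_le_Nb {v : V} {m : Mst d} (hv : v ∈ Zreg d c hc A)
    (hm : (v, m) ∈ Ycur d c hc A hv) : rnk d c hc A hv (v, m) ≤ Nb d c hc A hv :=
  rnk_min d c hc A hv (by rw [← Ycur_eq]; exact hm)

lemma step_core {v : V} {m : Mst d} (hv : v ∈ Zreg d c hc A)
    (hm : (v, m) ∈ Ycur d c hc A hv) :
    (v, m) ∈ Fset d ∩ Pre PA (Ycur d c hc A hv) ∨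
      (0 < rnk d c hc A hv (v, m) ∧
        (v, m) ∈ Pre PA (AttrE PA (rnk d c hc A hv (v, m) - 1) (Tcur d c hc A hv))) := by
  have hspec := rnk_spec d c hc A hv hm
  set r := rnk d c hc A hv (v, m) with hr
  cases hrr : r with
  | zero =>
    rw [hrr] at hspec
    rcases hspec with hT | hX
    · exact Or.inl hT
    · exact absurd (hX : v ∈ Xa d c hc A (alph d c hc A v)) (not_mem_Xa_alph d c hc A hv)
  | succ r' =>
    rw [hrr] at hspec
    rcases hspec with h | h
    · have := rnk_min d c hc A hv h
      omega
    · refine Or.inr ⟨by omega, ?_⟩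
      simpa using h

lemma eve_step {v : V} {m : Mst d} (hv : v ∈ Zreg d c hc A)
    (hm : (v, m) ∈ Ycur d c hc A hv) (he : v ∈ A.eve) :
    ∃ w, A.edge v w ∧ (w, pstep d c hc m w) ∈ Ycur d c hc A hv ∧
      ((v, m) ∈ Fset d ∨
        rnk d c hc A hv (w, pstep d c hc m w) < rnk d c hc A hv (v, m)) := by
  rcases step_core d c hc A hv hm with ⟨hF, hPre⟩ | ⟨hpos, hPre⟩
  · rcases hPre with ⟨-, ⟨w, mw⟩, ⟨hedge, hmw⟩, hY⟩ | ⟨ha, -⟩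
    · exact ⟨w, hedge, (show mw = pstep d c hc m w from hmw) ▸ hY, Or.inl hF⟩
    · exact absurd he ha
  · rcases hPre with ⟨-, ⟨w, mw⟩, ⟨hedge, hmw⟩, hY⟩ | ⟨ha, -⟩
    · have hY' : (w, pstep d c hc m w) ∈
          AttrE PA (rnk d c hc A hv (v, m) - 1) (Tcur d c hc A hv) :=
        (show mw = pstep d c hc m w from hmw) ▸ hY
      refine ⟨w, hedge, ?_, Or.inr ?_⟩
      · rw [Ycur_eq]
        refine attrE_steps_mono _ ?_ _ hY'
        have := rnk_le_Nb d c hc A hv hm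
        omega
      · have := rnk_min d c hc A hv hY'
        omega
    · exact absurd he ha

lemma adam_step {v : V} {m : Mst d} (hv : v ∈ Zreg d c hc A)
    (hm : (v, m) ∈ Ycur d c hc A hv) (ha : v ∉ A.eve) :
    ∀ w, A.edge v w → (w, pstep d c hc m w) ∈ Ycur d c hc A hv ∧
      ((v, m) ∈ Fset d ∨
        rnk d c hc A hv (w, pstep d c hc m w) < rnk d c hc A hv (v, m)) := by
  intro w hw
  rcases step_core d c hc A hv hm with ⟨hF, hPre⟩ | ⟨hpos, hPre⟩
  · rcases hPre with ⟨he, -⟩ | ⟨-, hall⟩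
    · exact absurd he ha
    · exact ⟨hall (w, pstep d c hc m w) ⟨hw, rfl⟩, Or.inl hF⟩
  · rcases hPre with ⟨he, -⟩ | ⟨-, hall⟩
    · exact absurd he ha
    · have hY := hall (w, pstep d c hc m w) ⟨hw, rfl⟩
      refine ⟨?_, Or.inr ?_⟩
      · rw [Ycur_eq]
        refine attrE_steps_mono _ ?_ _ hY
        have := rnk_le_Nb d c hc A hv hm
        omega
      · have := rnk_min d c hc A hv hY
        omega

/-- Next-vertex facts: a successor inside the current certificate is again in `Z`
with lexicographically no larger stage data. -/
lemma next_stage {v w : V} {m : Mst d} (hv : v ∈ Zreg d c hc A)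
    (h : (w, pstep d c hc m w) ∈ Ycur d c hc A hv) :
    ∃ hw : w ∈ Zreg d c hc A,
      alph d c hc A w ≤ alph d c hc A v ∧
      (alph d c hc A w = alph d c hc A v → Nb d c hc A hw ≤ Nb d c hc A hv) := by
  have hfresh : (w, fresh d c hc w) ∈ Ycur d c hc A hv :=
    Yg_up d c hc A (pstep_mono hc (mval_le_none d m)) h
  have hTh : w ∈ Theta d c hc A (Xa d c hc A (alph d c hc A v)) :=
    ⟨Nb d c hc A hv, hfresh⟩
  have hw : w ∈ Zreg d c hc A := by
    rw [← Theta_Z d c hc A]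
    exact (Theta d c hc A).monotone (Xa_subset_Z d c hc A _) hTh
  have halph : alph d c hc A w ≤ alph d c hc A v := alph_min d c hc A hTh
  refine ⟨hw, halph, fun heq => ?_⟩
  refine Nb_min d c hc A hw ?_
  rw [show alph d c hc A w = alph d c hc A v from heq]
  exact hfresh

/-- The real memory update: pending update, but resetting to a fresh state whenever
the pending update would leave the target's own certificate region. -/
def updR (m : Mst d) (_u w : V) : Mst d :=
  if h : w ∈ Zreg d c hc A then
    (if (w, pstep d c hc m w) ∈ Ycur d c hc A h then pstep d c hc m w
     else fresh d c hc w)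
  else pstep d c hc m w

lemma updR_mem (m : Mst d) (u w : V) (hw : w ∈ Zreg d c hc A) :
    (w, updR d c hc A m u w) ∈ Ycur d c hc A hw := by
  rw [updR, dif_pos hw]
  split
  · assumption
  · exact fresh_mem_Ycur d c hc A hw

lemma updR_no_reset {m : Mst d} {u w : V} (hw : w ∈ Zreg d c hc A)
    (hmem : (w, pstep d c hc m w) ∈ Ycur d c hc A hw) :
    updR d c hc A m u w = pstep d c hc m w := by
  rw [updR, dif_pos hw, if_pos hmem]

/-- Eve's next-move function. -/
def smove (v : V) (m : Mst d) : V :=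
  if h : ∃ hv : v ∈ Zreg d c hc A, v ∈ A.eve ∧ (v, m) ∈ Ycur d c hc A hv then
    Classical.choose (eve_step d c hc A h.choose h.choose_spec.2 h.choose_spec.1)
  else Classical.choose (A.succ v)

lemma smove_legal (v : V) (m : Mst d) : A.edge v (smove d c hc A v m) := by
  rw [smove]
  split
  · next h => exact (Classical.choose_spec
      (eve_step d c hc A h.choose h.choose_spec.2 h.choose_spec.1)).1
  · exact Classical.choose_spec (A.succ v)

lemma smove_spec {v : V} {m : Mst d} (hv : v ∈ Zreg d c hc A) (he : v ∈ A.eve)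
    (hm : (v, m) ∈ Ycur d c hc A hv) :
    (smove d c hc A v m, pstep d c hc m (smove d c hc A v m)) ∈ Ycur d c hc A hv ∧
      ((v, m) ∈ Fset d ∨
        rnk d c hc A hv (smove d c hc A v m, pstep d c hc m (smove d c hc A v m)) <
          rnk d c hc A hv (v, m)) := by
  have hex : ∃ hv : v ∈ Zreg d c hc A, v ∈ A.eve ∧ (v, m) ∈ Ycur d c hc A hv :=
    ⟨hv, he, hm⟩
  rw [smove, dif_pos hex]
  exact ⟨(Classical.choose_spec
      (eve_step d c hc A hex.choose hex.choose_spec.2 hex.choose_spec.1)).2.1,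
    (Classical.choose_spec
      (eve_step d c hc A hex.choose hex.choose_spec.2 hex.choose_spec.1)).2.2⟩


/-! ### Congruence lemmas for stage data -/

lemma Ycur_congr {v w : V} (hv : v ∈ Zreg d c hc A) (hw : w ∈ Zreg d c hc A)
    (h1 : alph d c hc A v = alph d c hc A w) (h2 : Nb d c hc A hv = Nb d c hc A hw) :
    Ycur d c hc A hv = Ycur d c hc A hw := by
  rw [Ycur, Ycur, h1, h2]

lemma Tcur_congr {v w : V} (hv : v ∈ Zreg d c hc A) (hw : w ∈ Zreg d c hc A)
    (h1 : alph d c hc A v = alph d c hc A w) (h2 : Nb d c hc A hv = Nb d c hc A hw) :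
    Tcur d c hc A hv = Tcur d c hc A hw := by
  rw [Tcur, Tcur, h1, Ycur_congr d c hc A hv hw h1 h2]

lemma rnk_congr {v w : V} (hv : v ∈ Zreg d c hc A) (hw : w ∈ Zreg d c hc A)
    (h1 : alph d c hc A v = alph d c hc A w) (h2 : Nb d c hc A hv = Nb d c hc A hw)
    (s : V × Mst d) : rnk d c hc A hv s = rnk d c hc A hw s := by
  rw [rnk, rnk, Tcur_congr d c hc A hv hw h1 h2]

/-! ### The memory structure and strategy -/

/-- The memory structure. -/
def MemS : Memory V := ⟨Mst d, none, updR d c hc A⟩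

/-- Eve's finite-memory strategy. -/
def stratS : EveMemStrategy A (MemS d c hc A) :=
  ⟨smove d c hc A, fun v m _ => smove_legal d c hc A v m⟩

/-! ### Soundness -/

/-- An antitone sequence into a well-founded linear order is eventually constant. -/
lemma antitone_stab {α : Type*} [LinearOrder α] [WellFoundedLT α] (f : ℕ → α)
    (h : ∀ k, f (k + 1) ≤ f k) : ∃ K, ∀ k, K ≤ k → f k = f K := by
  have hanti : ∀ i j, i ≤ j → f j ≤ f i := fun i j hij =>
    Nat.le_induction (le_refl _) (fun n _ ih => le_trans (h n) ih) j hij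
  obtain ⟨a, ⟨K, rfl⟩, hmin⟩ :=
    (wellFounded_lt : WellFounded ((· < ·) : α → α → Prop)).has_min
      (Set.range f) ⟨f 0, ⟨0, rfl⟩⟩
  exact ⟨K, fun k hk => le_antisymm (hanti K k hk) (not_lt.mp (hmin (f k) ⟨k, rfl⟩))⟩

lemma distC_le_of {π : ℕ → V} {k j : ℕ}
    (h : Even (c (π (k + j))) ∧ c (π (k + j)) ≤ c (π k)) :
    distC π c k ≤ (j : ℕ∞) :=
  sInf_le ⟨j, h, rfl⟩

theorem soundness {v : V} (hv : v ∈ Zreg d c hc A) :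
    EveMemWinsFrom A (MemS d c hc A) (stratS d c hc A) (FinParity c) v := by
  intro π hplay h0 hcons
  set mseq : ℕ → Mst d := fun k => memRun (MemS d c hc A) π k with hmseq
  -- the invariant
  have inv : ∀ k, ∃ hk : π k ∈ Zreg d c hc A, (π k, mseq k) ∈ Ycur d c hc A hk := by
    intro k
    induction k with
    | zero =>
      refine ⟨h0 ▸ hv, ?_⟩
      have : (π 0, fresh d c hc (π 0)) ∈ Ycur d c hc A (h0 ▸ hv) :=
        fresh_mem_Ycur d c hc A _
      exact Yg_up d c hc A (mval_le_none d _) this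
    | succ k ih =>
      obtain ⟨hk, hmem⟩ := ih
      have hstepmem : (π (k + 1), pstep d c hc (mseq k) (π (k + 1))) ∈ Ycur d c hc A hk := by
        by_cases he : π k ∈ A.eve
        · have hmove : π (k + 1) = smove d c hc A (π k) (mseq k) := hcons k he
          rw [hmove]
          exact (smove_spec d c hc A hk he hmem).1
        · exact (adam_step d c hc A hk hmem he (π (k + 1)) (hplay k)).1
      obtain ⟨hw, -, -⟩ := next_stage d c hc A hk hstepmem
      exact ⟨hw, updR_mem d c hc A (mseq k) (π k) (π (k + 1)) hw⟩
  have hz : ∀ k, π k ∈ Zreg d c hc A := fun k => (inv k).choose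
  have hmem : ∀ k, (π k, mseq k) ∈ Ycur d c hc A (hz k) := fun k => (inv k).choose_spec
  -- the one-step facts
  have stepmem : ∀ k, (π (k + 1), pstep d c hc (mseq k) (π (k + 1))) ∈ Ycur d c hc A (hz k) := by
    intro k
    by_cases he : π k ∈ A.eve
    · have hmove : π (k + 1) = smove d c hc A (π k) (mseq k) := hcons k he
      rw [hmove]
      exact (smove_spec d c hc A (hz k) he (hmem k)).1
    · exact (adam_step d c hc A (hz k) (hmem k) he (π (k + 1)) (hplay k)).1
  have rankdrop : ∀ k, mseq k ≠ none →
      rnk d c hc A (hz k) (π (k + 1), pstep d c hc (mseq k) (π (k + 1))) <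
        rnk d c hc A (hz k) (π k, mseq k) := by
    intro k hne
    by_cases he : π k ∈ A.eve
    · have hmove : π (k + 1) = smove d c hc A (π k) (mseq k) := hcons k he
      rcases (smove_spec d c hc A (hz k) he (hmem k)).2 with hF | hlt
      · exact absurd hF hne
      · rw [hmove]; exact hlt
    · rcases (adam_step d c hc A (hz k) (hmem k) he (π (k + 1)) (hplay k)).2 with hF | hlt
      · exact absurd hF hne
      · exact hlt
  have lexstep : ∀ k, alph d c hc A (π (k + 1)) ≤ alph d c hc A (π k) ∧
      (alph d c hc A (π (k + 1)) = alph d c hc A (π k) →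
        Nb d c hc A (hz (k + 1)) ≤ Nb d c hc A (hz k)) := by
    intro k
    obtain ⟨hw, hle, himp⟩ := next_stage d c hc A (hz k) (stepmem k)
    exact ⟨hle, himp⟩
  -- stabilization of the outer stage
  obtain ⟨K1, hK1⟩ := antitone_stab (fun k => alph d c hc A (π k)) (fun k => (lexstep k).1)
  obtain ⟨K2, hK2⟩ := antitone_stab (fun j => Nb d c hc A (hz (K1 + j))) (by
    intro j
    show Nb d c hc A (hz (K1 + j + 1)) ≤ Nb d c hc A (hz (K1 + j))
    refine (lexstep (K1 + j)).2 ?_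
    have h1 := hK1 (K1 + j + 1) (by omega)
    have h2 := hK1 (K1 + j) (by omega)
    rw [h1, h2])
  set K := K1 + K2 with hK
  have hstab : ∀ k, K ≤ k →
      alph d c hc A (π k) = alph d c hc A (π K) ∧
      Nb d c hc A (hz k) = Nb d c hc A (hz K) := by
    intro k hk
    constructor
    · have h1 := hK1 k (by omega)
      have h2 := hK1 K (by omega)
      rw [h1, h2]
    · have h1 := hK2 (k - K1) (by omega)
      have h2 : K1 + (k - K1) = k := by omega
      simp only [h2] at h1
      exact h1
  set Ns := Nb d c hc A (hz K) with hNs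
  -- no resets after stabilization
  have noreset : ∀ k, K ≤ k → mseq (k + 1) = pstep d c hc (mseq k) (π (k + 1)) := by
    intro k hk
    have h1 := hstab k hk
    have h2 := hstab (k + 1) (by omega)
    have hY : (π (k + 1), pstep d c hc (mseq k) (π (k + 1))) ∈ Ycur d c hc A (hz (k + 1)) := by
      rw [← Ycur_congr d c hc A (hz k) (hz (k + 1))
        (by rw [h1.1, h2.1]) (by rw [h1.2, h2.2])]
      exact stepmem k
    show updR d c hc A (mseq k) (π k) (π (k + 1)) = _
    exact updR_no_reset d c hc A (hz (k + 1)) hY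
  -- bounded service after stabilization
  have service : ∀ k, K ≤ k → ∃ j, j ≤ Ns ∧ mseq (k + j) = none := by
    intro k hk
    by_contra hcon
    push_neg at hcon
    have key : ∀ j, j ≤ Ns → rnk d c hc A (hz (k + j)) (π (k + j), mseq (k + j)) + j ≤ Ns := by
      intro j
      induction j with
      | zero =>
        intro _
        have := rnk_le_Nb d c hc A (hz k) (hmem k)
        have hNb : Nb d c hc A (hz k) = Ns := (hstab k hk).2
        simp only [Nat.add_zero]
        omega
      | succ j ih =>
        intro hj1
        simp only [Nat.add_succ]
        have hihj := ih (by omega)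
        have hdrop := rankdrop (k + j) (hcon j (by omega))
        have hmk : mseq (k + j + 1) = pstep d c hc (mseq (k + j)) (π (k + j + 1)) :=
          noreset (k + j) (by omega)
        have hcongr := rnk_congr d c hc A (hz (k + j)) (hz (k + j + 1))
          (by rw [(hstab (k + j) (by omega)).1, (hstab (k + j + 1) (by omega)).1])
          (by rw [(hstab (k + j) (by omega)).2, (hstab (k + j + 1) (by omega)).2])
          (π (k + j + 1), mseq (k + j + 1))
        rw [← hcongr, hmk]
        have : rnk d c hc A (hz (k + j))
            (π (k + j + 1), pstep d c hc (mseq (k + j)) (π (k + j + 1))) <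
            rnk d c hc A (hz (k + j)) (π (k + j), mseq (k + j)) := hdrop
        omega
    have hzero := key Ns (le_refl _)
    rcases step_core d c hc A (hz (k + Ns)) (hmem (k + Ns)) with ⟨hF, -⟩ | ⟨hpos, -⟩
    · exact hcon Ns (le_refl _) hF
    · omega
  -- every late request is served within `Ns` steps
  have hbound : ∀ k, K ≤ k → distC π c (k + 1) ≤ (Ns : ℕ∞) := by
    intro k hk
    by_cases hodd : Odd (c (π (k + 1)))
    · have hks : mseq (k + 1) = pstep d c hc (mseq k) (π (k + 1)) := noreset k hk
      obtain ⟨p, hp, hple, -⟩ := pstep_odd hc (m := mseq k) hodd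
      have hsome : mseq (k + 1) = some p := by rw [hks, hp]
      obtain ⟨j1, hj1le, hj1⟩ := service (k + 1) (by omega)
      have hex : ∃ j, mseq (k + 1 + j) = none := ⟨j1, hj1⟩
      have hj0 : mseq (k + 1 + Nat.find hex) = none := Nat.find_spec hex
      have hj0le : Nat.find hex ≤ Ns := le_trans (Nat.find_le hj1) hj1le
      have hj0pos : Nat.find hex ≠ 0 := by
        intro h0
        rw [h0] at hj0
        rw [show k + 1 + 0 = k + 1 from rfl, hsome] at hj0
        exact absurd hj0 (by simp)
      obtain ⟨i0, hfind⟩ := Nat.exists_eq_succ_of_ne_zero hj0pos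
      have chain : ∀ i, i ≤ i0 → mseq (k + 1 + i) ≠ none ∧
          mval d (mseq (k + 1 + i)) ≤ (p : ℕ) := by
        intro i
        induction i with
        | zero =>
          intro _
          constructor
          · rw [show k + 1 + 0 = k + 1 from rfl, hsome]; simp
          · rw [show k + 1 + 0 = k + 1 from rfl, hsome]; simp [mval]
        | succ i ih =>
          intro hi
          have hprev := ih (by omega)
          have hstep : mseq (k + 1 + (i + 1)) =
              pstep d c hc (mseq (k + 1 + i)) (π (k + 1 + i + 1)) :=
            noreset (k + 1 + i) (by omega)
          have hne : mseq (k + 1 + (i + 1)) ≠ none :=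
            Nat.find_min hex (by rw [hfind]; omega)
          constructor
          · exact hne
          · rw [hstep]
            refine le_trans (mval_pstep_le hc ?_) hprev.2
            rw [← hstep]
            exact hne
      rw [hfind] at hj0 hj0le
      have hchain := chain i0 (le_refl _)
      have hnone : pstep d c hc (mseq (k + 1 + i0)) (π (k + 1 + i0 + 1)) = none := by
        rw [← noreset (k + 1 + i0) (by omega)]
        exact hj0
      obtain ⟨hnotodd, hall⟩ := pstep_none_eq hc hnone
      obtain ⟨q, hq⟩ := Option.ne_none_iff_exists'.mp hchain.1
      have hcle : c (π (k + 1 + i0 + 1)) ≤ (q : ℕ) := hall q hq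
      have hqp : (q : ℕ) ≤ (p : ℕ) := by
        have := hchain.2
        rw [hq] at this
        simpa [mval] using this
      have heven : Even (c (π (k + 1 + i0 + 1))) := Nat.not_odd_iff_even.mp hnotodd
      have hd : distC π c (k + 1) ≤ ((i0 + 1 : ℕ) : ℕ∞) := by
        refine distC_le_of c ⟨?_, ?_⟩
        · exact heven
        · have hrfl : c (π (k + 1 + (i0 + 1))) = c (π (k + 1 + i0 + 1)) := rfl
          omega
      refine le_trans hd ?_
      exact_mod_cast Nat.cast_le.mpr hj0le
    · have heven : Even (c (π (k + 1))) := Nat.not_odd_iff_even.mp hodd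
      have hd : distC π c (k + 1) ≤ ((0 : ℕ) : ℕ∞) :=
        distC_le_of c ⟨by rw [show k + 1 + 0 = k + 1 from rfl]; exact heven,
          by rw [show k + 1 + 0 = k + 1 from rfl]⟩
      exact le_trans hd (by exact_mod_cast Nat.zero_le Ns)
  -- conclude
  show Filter.limsup (fun k => distC π c k) Filter.atTop < ⊤
  have hev : ∀ᶠ k in Filter.atTop, distC π c k ≤ (Ns : ℕ∞) := by
    rw [Filter.eventually_atTop]
    refine ⟨K + 1, fun k hk => ?_⟩
    obtain ⟨k', rfl⟩ : ∃ k', k = k' + 1 := ⟨k - 1, by omega⟩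
    exact hbound k' (by omega)
  refine lt_of_le_of_lt (Filter.limsup_le_of_le ?_ hev) ?_
  · isBoundedDefault
  · exact WithTop.coe_lt_top Ns


/-! ### Completeness: ordinal approximants of the inner gfp -/

/-- Ordinal approximants of the inner greatest fixpoint over `Z`. -/
def gA (N : ℕ) (β : Ordinal) : Set (V × Mst d) :=
  OrdinalApprox.gfpApprox (Phi d c hc A N (Zreg d c hc A)) ⊤ β

/-- Avoid set at approximant `β`. -/
def Sb (N : ℕ) (β : Ordinal) : Set (V × Mst d) :=
  Tgt d c hc A (Zreg d c hc A) (gA d c hc A N β)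

lemma Phi_gA_eq (N : ℕ) (β : Ordinal) :
    Phi d c hc A N (Zreg d c hc A) (gA d c hc A N β) =
      AttrE PA N (Sb d c hc A N β) := rfl

lemma not_mem_gA {N : ℕ} {β : Ordinal} {s : V × Mst d} (h : s ∉ gA d c hc A N β) :
    ∃ γ, γ < β ∧ s ∉ Phi d c hc A N (Zreg d c hc A) (gA d c hc A N γ) := by
  rw [gA, OrdinalApprox.gfpApprox] at h
  by_contra hcon
  push_neg at hcon
  refine h ?_
  refine ⟨trivial, ?_⟩
  simp only [Set.iInf_eq_iInter, Set.mem_iInter]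
  exact hcon

lemma Yg_subset_gA (N : ℕ) (β : Ordinal) :
    Yg d c hc A N (Zreg d c hc A) ⊆ gA d c hc A N β :=
  OrdinalApprox.le_gfpApprox_of_mem_fixedPoints _ (OrderHom.isFixedPt_gfp _) le_top β

lemma Zup_subset_Yg (N : ℕ) :
    {s : V × Mst d | s.1 ∈ Zreg d c hc A} ⊆ Yg d c hc A N (Zreg d c hc A) := by
  refine OrderHom.le_gfp _ ?_
  intro s hs
  exact subset_attrE _ N _ (Or.inr hs)

lemma not_mem_Yg_of_not_Z {w : V} (hw : w ∉ Zreg d c hc A) (N : ℕ) :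
    (w, fresh d c hc w) ∉ Yg d c hc A N (Zreg d c hc A) := by
  intro hmem
  refine hw ?_
  rw [← Theta_Z d c hc A]
  exact ⟨N, hmem⟩

/-- The descent measure of a state outside the inner gfp. -/
def mu (N : ℕ) (s : V × Mst d) : Ordinal :=
  sInf {β | s ∉ Phi d c hc A N (Zreg d c hc A) (gA d c hc A N β)}

lemma mu_nonempty {N : ℕ} {s : V × Mst d} (h : s ∉ Yg d c hc A N (Zreg d c hc A)) :
    {β | s ∉ Phi d c hc A N (Zreg d c hc A) (gA d c hc A N β)}.Nonempty := by
  have hbig : s ∉ gA d c hc A N ((Order.succ (Cardinal.mk (Set (V × Mst d)))).ord) := by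
    rw [gA, OrdinalApprox.gfpApprox_ord_eq_gfp]
    exact h
  obtain ⟨γ, -, hγ⟩ := not_mem_gA d c hc A hbig
  exact ⟨γ, hγ⟩

lemma mu_spec {N : ℕ} {s : V × Mst d} (h : s ∉ Yg d c hc A N (Zreg d c hc A)) :
    s ∉ AttrE PA N (Sb d c hc A N (mu d c hc A N s)) := by
  rw [← Phi_gA_eq]
  exact csInf_mem (mu_nonempty d c hc A h)

lemma mu_descent {N : ℕ} {s s' : V × Mst d}
    (h : s' ∉ gA d c hc A N (mu d c hc A N s)) :
    s' ∉ Yg d c hc A N (Zreg d c hc A) ∧ mu d c hc A N s' < mu d c hc A N s := by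
  constructor
  · intro hmem
    exact h (Yg_subset_gA d c hc A N _ hmem)
  · obtain ⟨γ, hγ, hγ2⟩ := not_mem_gA d c hc A h
    exact lt_of_le_of_lt (csInf_le (OrderBot.bddBelow _) hγ2) hγ


/-! ### Partial plays -/

variable (σ : EveStrategy A)

/-- A finite partial play consistent with an Eve strategy. -/
structure PP where
  len : ℕ
  f : ℕ → V
  edges : ∀ k, k < len → A.edge (f k) (f (k + 1))
  cons : ∀ k, k < len → f k ∈ A.eve → f (k + 1) = σ.move (hist f k) (f k)

/-- Extension of partial plays. -/
def PPExt (P P' : PP A σ) : Prop :=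
  P.len ≤ P'.len ∧ ∀ k, k ≤ P.len → P'.f k = P.f k

lemma PPExt_refl (P : PP A σ) : PPExt A σ P P :=
  ⟨le_refl _, fun _ _ => rfl⟩

lemma PPExt_trans {P P' P'' : PP A σ} (h1 : PPExt A σ P P')
    (h2 : PPExt A σ P' P'') : PPExt A σ P P'' :=
  ⟨le_trans h1.1 h2.1, fun k hk => by rw [h2.2 k (le_trans hk h1.1), h1.2 k hk]⟩

lemma hist_congr {f f' : ℕ → V} {k : ℕ} (h : ∀ u, u < k → f u = f' u) :
    hist f k = hist f' k := by
  unfold hist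
  refine List.map_congr_left ?_
  intro a ha
  exact h a (List.mem_range.mp ha)

/-- Extending a partial play by one vertex. -/
def PP.snoc (P : PP A σ) (w : V) (hedge : A.edge (P.f P.len) w)
    (hcons : P.f P.len ∈ A.eve → w = σ.move (hist P.f P.len) (P.f P.len)) :
    PP A σ where
  len := P.len + 1
  f := fun k => if k ≤ P.len then P.f k else w
  edges := by
    intro k hk
    rcases Nat.lt_succ_iff_lt_or_eq.mp hk with h | rfl
    · rw [if_pos (by omega), if_pos (by omega)]
      exact P.edges k h
    · rw [if_pos (le_refl _), if_neg (by omega)]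
      exact hedge
  cons := by
    intro k hk he
    have hh : hist (fun k => if k ≤ P.len then P.f k else w) k = hist P.f k :=
      hist_congr (fun u hu => by rw [if_pos (by omega)])
    rcases Nat.lt_succ_iff_lt_or_eq.mp hk with h | rfl
    · rw [if_pos (show k + 1 ≤ P.len by omega), if_pos (show k ≤ P.len by omega), hh]
      refine P.cons k h ?_
      rw [if_pos (show k ≤ P.len by omega)] at he
      exact he
    · rw [if_neg (by omega), if_pos (le_refl P.len), hh]
      rw [if_pos (le_refl P.len)] at he
      exact hcons he

lemma PP.snoc_len (P : PP A σ) (w hedge hcons) :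
    (PP.snoc A σ P w hedge hcons).len = P.len + 1 := rfl

lemma PP.snoc_last (P : PP A σ) (w hedge hcons) :
    (PP.snoc A σ P w hedge hcons).f (P.len + 1) = w := by
  show (if P.len + 1 ≤ P.len then _ else w) = w
  rw [if_neg (by omega)]

lemma PP.snoc_ext (P : PP A σ) (w hedge hcons) :
    PPExt A σ P (PP.snoc A σ P w hedge hcons) :=
  ⟨by rw [PP.snoc_len]; omega, fun k hk => by
    show (if k ≤ P.len then P.f k else w) = P.f k
    rw [if_pos hk]⟩

/-! ### The pending sequence along a play -/

/-- Pending sequence rooted at `r`: `pend f r j` is the pending state at position `r + j`. -/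
def pend (f : ℕ → V) (r : ℕ) : ℕ → Mst d
  | 0 => fresh d c hc (f r)
  | j + 1 => pstep d c hc (pend f r j) (f (r + j + 1))

lemma pend_congr {f f' : ℕ → V} {r : ℕ} (j : ℕ) (h : ∀ u, u ≤ r + j → f u = f' u) :
    pend d c hc f r j = pend d c hc f' r j := by
  induction j with
  | zero => show fresh d c hc (f r) = fresh d c hc (f' r); rw [h r (by omega)]
  | succ j ih =>
    show pstep d c hc (pend d c hc f r j) (f (r + j + 1)) = _
    rw [ih (fun u hu => h u (by omega)), h (r + j + 1) (by omega)]
    rfl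

/-! ### Window construction -/

/-- Adam's descent step: from a reset state avoiding `Sb`, the next state can be
forced outside the approximant `gA N β`. -/
lemma descend (N : ℕ) (β : Ordinal) (P : PP A σ) (r o : ℕ) (hlen : P.len = r + o)
    (hnone : pend d c hc P.f r o = none)
    (hS : (P.f (r + o), pend d c hc P.f r o) ∉ Sb d c hc A N β) :
    ∃ P' : PP A σ, PPExt A σ P P' ∧ P'.len = r + (o + 1) ∧
      (P'.f (r + (o + 1)), pend d c hc P'.f r (o + 1)) ∉ gA d c hc A N β := by
  have hF : (P.f (r + o), pend d c hc P.f r o) ∈ Fset d := hnone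
  have hnPre : (P.f (r + o), pend d c hc P.f r o) ∉ Pre PA (gA d c hc A N β) := by
    intro hPre
    exact hS (Or.inl ⟨hF, hPre⟩)
  by_cases he : P.f (r + o) ∈ A.eve
  · set w := σ.move (hist P.f P.len) (P.f P.len) with hw
    have hedge : A.edge (P.f P.len) w := σ.legal _ _ (by rw [hlen]; exact he)
    refine ⟨PP.snoc A σ P w hedge (fun _ => rfl), PP.snoc_ext A σ P w _ _,
      by rw [PP.snoc_len, hlen]; omega, ?_⟩
    set P' := PP.snoc A σ P w hedge (fun _ => rfl) with hP'
    have hagree : ∀ u, u ≤ r + o → P'.f u = P.f u :=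
      fun u hu => (PP.snoc_ext A σ P w _ _).2 u (by omega)
    have hpend : pend d c hc P'.f r (o + 1) =
        pstep d c hc (pend d c hc P.f r o) (P'.f (r + o + 1)) := by
      show pstep d c hc (pend d c hc P'.f r o) (P'.f (r + o + 1)) = _
      rw [pend_congr d c hc (f := P'.f) (f' := P.f) o (fun u hu => hagree u hu)]
    have hlast : P'.f (r + o + 1) = w := by
      rw [show r + o + 1 = P.len + 1 by omega]
      exact PP.snoc_last A σ P w hedge _
    intro hmem
    refine hnPre (Or.inl ⟨he, (w, pstep d c hc (pend d c hc P.f r o) w), ⟨?_, rfl⟩, ?_⟩)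
    · rw [← hlen]; exact hedge
    · have hmem' : (P'.f (r + o + 1), pend d c hc P'.f r (o + 1)) ∈ gA d c hc A N β := hmem
      rw [hpend, hlast] at hmem'
      exact hmem'
  · have hnotall : ¬ ∀ s', (prodArena d c hc A).edge
        (P.f (r + o), pend d c hc P.f r o) s' → s' ∈ gA d c hc A N β := by
      intro hall
      exact hnPre (Or.inr ⟨he, hall⟩)
    push_neg at hnotall
    obtain ⟨⟨w, mw⟩, ⟨hedge, hmw⟩, hout⟩ := hnotall
    have hedge' : A.edge (P.f P.len) w := by rw [hlen]; exact hedge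
    refine ⟨PP.snoc A σ P w hedge' (fun hee => absurd (hlen ▸ hee) he),
      PP.snoc_ext A σ P w _ _, by rw [PP.snoc_len, hlen]; omega, ?_⟩
    set P' := PP.snoc A σ P w hedge' (fun hee => absurd (hlen ▸ hee) he) with hP'
    have hagree : ∀ u, u ≤ r + o → P'.f u = P.f u :=
      fun u hu => (PP.snoc_ext A σ P w _ _).2 u (by omega)
    have hpend : pend d c hc P'.f r (o + 1) =
        pstep d c hc (pend d c hc P.f r o) (P'.f (r + o + 1)) := by
      show pstep d c hc (pend d c hc P'.f r o) (P'.f (r + o + 1)) = _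
      rw [pend_congr d c hc (f := P'.f) (f' := P.f) o (fun u hu => hagree u hu)]
    have hlast : P'.f (r + o + 1) = w := by
      rw [show r + o + 1 = P.len + 1 by omega]
      exact PP.snoc_last A σ P w hedge' _
    show (P'.f (r + o + 1), pend d c hc P'.f r (o + 1)) ∉ gA d c hc A N β
    rw [hpend, hlast, ← hmw]
    exact hout

/-- One step of attractor-complement avoidance. -/
lemma avoid_step (N : ℕ) (β : Ordinal) (j : ℕ) (P : PP A σ) (r o : ℕ)
    (hlen : P.len = r + o)
    (hnPre : (P.f (r + o), pend d c hc P.f r o) ∉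
      Pre PA (AttrE PA j (Sb d c hc A N β))) :
    ∃ P' : PP A σ, PPExt A σ P P' ∧ P'.len = r + (o + 1) ∧
      (P'.f (r + (o + 1)), pend d c hc P'.f r (o + 1)) ∉
        AttrE PA j (Sb d c hc A N β) := by
  by_cases he : P.f (r + o) ∈ A.eve
  · set w := σ.move (hist P.f P.len) (P.f P.len) with hw
    have hedge : A.edge (P.f P.len) w := σ.legal _ _ (by rw [hlen]; exact he)
    refine ⟨PP.snoc A σ P w hedge (fun _ => rfl), PP.snoc_ext A σ P w _ _,
      by rw [PP.snoc_len, hlen]; omega, ?_⟩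
    set P' := PP.snoc A σ P w hedge (fun _ => rfl) with hP'
    have hagree : ∀ u, u ≤ r + o → P'.f u = P.f u :=
      fun u hu => (PP.snoc_ext A σ P w _ _).2 u (by omega)
    have hpend : pend d c hc P'.f r (o + 1) =
        pstep d c hc (pend d c hc P.f r o) (P'.f (r + o + 1)) := by
      show pstep d c hc (pend d c hc P'.f r o) (P'.f (r + o + 1)) = _
      rw [pend_congr d c hc (f := P'.f) (f' := P.f) o (fun u hu => hagree u hu)]
    have hlast : P'.f (r + o + 1) = w := by
      rw [show r + o + 1 = P.len + 1 by omega]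
      exact PP.snoc_last A σ P w hedge _
    intro hmem
    refine hnPre (Or.inl ⟨he, (w, pstep d c hc (pend d c hc P.f r o) w), ⟨?_, rfl⟩, ?_⟩)
    · rw [← hlen]; exact hedge
    · have hmem' : (P'.f (r + o + 1), pend d c hc P'.f r (o + 1)) ∈
          AttrE PA j (Sb d c hc A N β) := hmem
      rw [hpend, hlast] at hmem'
      exact hmem'
  · have hnotall : ¬ ∀ s', (prodArena d c hc A).edge
        (P.f (r + o), pend d c hc P.f r o) s' →
        s' ∈ AttrE PA j (Sb d c hc A N β) := by
      intro hall
      exact hnPre (Or.inr ⟨he, hall⟩)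
    push_neg at hnotall
    obtain ⟨⟨w, mw⟩, ⟨hedge, hmw⟩, hout⟩ := hnotall
    have hedge' : A.edge (P.f P.len) w := by rw [hlen]; exact hedge
    refine ⟨PP.snoc A σ P w hedge' (fun hee => absurd (hlen ▸ hee) he),
      PP.snoc_ext A σ P w _ _, by rw [PP.snoc_len, hlen]; omega, ?_⟩
    set P' := PP.snoc A σ P w hedge' (fun hee => absurd (hlen ▸ hee) he) with hP'
    have hagree : ∀ u, u ≤ r + o → P'.f u = P.f u :=
      fun u hu => (PP.snoc_ext A σ P w _ _).2 u (by omega)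
    have hpend : pend d c hc P'.f r (o + 1) =
        pstep d c hc (pend d c hc P.f r o) (P'.f (r + o + 1)) := by
      show pstep d c hc (pend d c hc P'.f r o) (P'.f (r + o + 1)) = _
      rw [pend_congr d c hc (f := P'.f) (f' := P.f) o (fun u hu => hagree u hu)]
    have hlast : P'.f (r + o + 1) = w := by
      rw [show r + o + 1 = P.len + 1 by omega]
      exact PP.snoc_last A σ P w hedge' _
    show (P'.f (r + o + 1), pend d c hc P'.f r (o + 1)) ∉ AttrE PA j (Sb d c hc A N β)
    rw [hpend, hlast, ← hmw]
    exact hout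

/-- One window of Adam's spoiling construction. -/
lemma window (N : ℕ) (β : Ordinal) (j : ℕ) :
    ∀ (P : PP A σ) (r o : ℕ), P.len = r + o →
    (P.f (r + o), pend d c hc P.f r o) ∉ AttrE PA j (Sb d c hc A N β) →
    ∃ (P' : PP A σ) (o' : ℕ), PPExt A σ P P' ∧ P'.len = r + o' ∧ o ≤ o' ∧
      ((o' = o + j ∧ ∀ i, i ≤ j →
          ((P'.f (r + o + i), pend d c hc P'.f r (o + i)) ∉ Sb d c hc A N β ∧
            pend d c hc P'.f r (o + i) ≠ none)) ∨
       (o < o' ∧ (P'.f (r + o'), pend d c hc P'.f r o') ∉ gA d c hc A N β)) := by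
  induction j with
  | zero =>
    intro P r o hlen hav
    have hS : (P.f (r + o), pend d c hc P.f r o) ∉ Sb d c hc A N β := hav
    by_cases hnone : pend d c hc P.f r o = none
    · obtain ⟨P', hext, hlen', hout⟩ := descend d c hc A σ N β P r o hlen hnone hS
      exact ⟨P', o + 1, hext, hlen', by omega, Or.inr ⟨by omega, hout⟩⟩
    · refine ⟨P, o, PPExt_refl A σ P, hlen, le_refl _, Or.inl ⟨by omega, ?_⟩⟩
      intro i hi
      obtain rfl : i = 0 := by omega
      exact ⟨hS, hnone⟩
  | succ j ih =>
    intro P r o hlen hav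
    have hav0 : (P.f (r + o), pend d c hc P.f r o) ∉ AttrE PA j (Sb d c hc A N β) :=
      fun h => hav (Set.subset_union_left h)
    have hS : (P.f (r + o), pend d c hc P.f r o) ∉ Sb d c hc A N β :=
      fun h => hav0 (subset_attrE _ j _ h)
    by_cases hnone : pend d c hc P.f r o = none
    · obtain ⟨P', hext, hlen', hout⟩ := descend d c hc A σ N β P r o hlen hnone hS
      exact ⟨P', o + 1, hext, hlen', by omega, Or.inr ⟨by omega, hout⟩⟩
    · have hnPre : (P.f (r + o), pend d c hc P.f r o) ∉
          Pre PA (AttrE PA j (Sb d c hc A N β)) := by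
        intro hPre
        exact hav (Set.subset_union_right hPre)
      obtain ⟨P1, hext1, hlen1, hstep⟩ := avoid_step d c hc A σ N β j P r o hlen hnPre
      obtain ⟨P', o', hext, hlen', hle, hres⟩ := ih P1 r (o + 1) hlen1 hstep
      have hextt : PPExt A σ P P' := PPExt_trans A σ hext1 hext
      refine ⟨P', o', hextt, hlen', by omega, ?_⟩
      rcases hres with ⟨ho', hwin⟩ | ⟨ho', hout⟩
      · refine Or.inl ⟨by omega, ?_⟩
        intro i hi
        rcases Nat.eq_zero_or_pos i with rfl | hipos
        · have hfeq : P'.f (r + o) = P.f (r + o) := by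
            rw [hextt.2 (r + o) (by omega)]
          have hpeq : pend d c hc P'.f r o = pend d c hc P.f r o :=
            pend_congr d c hc o (fun u hu => hextt.2 u (by omega))
          rw [show r + o + 0 = r + o from rfl, show o + 0 = o from rfl, hfeq, hpeq]
          exact ⟨hS, hnone⟩
        · obtain ⟨i', rfl⟩ : ∃ i', i = i' + 1 := ⟨i - 1, by omega⟩
          have hthis := hwin i' (by omega)
          constructor
          · have harr : r + o + (i' + 1) = r + (o + 1) + i' := by omega
            have harr2 : o + (i' + 1) = (o + 1) + i' := by omega
            rw [harr, harr2]
            exact hthis.1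
          · have harr2 : o + (i' + 1) = (o + 1) + i' := by omega
            rw [harr2]
            exact hthis.2
      · exact Or.inr ⟨by omega, hout⟩


/-! ### Extracting an unanswered request from a completed window -/

lemma mval_le_d_of_ne_none {m : Mst d} (h : m ≠ none) : mval d m ≤ d := by
  cases m with
  | none => exact absurd rfl h
  | some q => exact mval_le_d q

lemma pend_succ (f : ℕ → V) (r u : ℕ) :
    pend d c hc f r (u + 1) = pstep d c hc (pend d c hc f r u) (f (r + u + 1)) := rfl

lemma window_witness (f : ℕ → V) (r o n : ℕ)
    (H : ∀ i, i ≤ (d + 1) * (n + 1) → pend d c hc f r (o + i) ≠ none) :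
    ∃ s, r ≤ s ∧ s + (n + 1) ≤ r + o + (d + 1) * (n + 1) ∧ Odd (c (f s)) ∧
      ∀ jj, 1 ≤ jj → jj ≤ n + 1 →
        ¬ (Even (c (f (s + jj))) ∧ c (f (s + jj)) ≤ c (f s)) := by
  set L := (d + 1) * (n + 1) with hL
  -- monotonicity of the pending value within the window
  have hstep : ∀ i, i + 1 ≤ L →
      mval d (pend d c hc f r (o + (i + 1))) ≤ mval d (pend d c hc f r (o + i)) := by
    intro i hi
    have : pend d c hc f r (o + (i + 1)) =
        pstep d c hc (pend d c hc f r (o + i)) (f (r + (o + i) + 1)) := rfl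
    rw [this]
    refine mval_pstep_le hc ?_
    rw [← this]
    exact H (i + 1) hi
  have hmono : ∀ i i', i ≤ i' → i' ≤ L →
      mval d (pend d c hc f r (o + i')) ≤ mval d (pend d c hc f r (o + i)) := by
    intro i i' hii' hi'
    induction i' with
    | zero => obtain rfl : i = 0 := by omega
              exact le_refl _
    | succ i' ih =>
      rcases Nat.le_succ_iff.mp hii' with h | rfl
      · exact le_trans (hstep i' (by omega)) (ih h (by omega))
      · exact le_refl _
  -- pigeonhole on the sample points
  have hsample : ∃ j, j ≤ d ∧
      mval d (pend d c hc f r (o + (j + 1) * (n + 1))) =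
      mval d (pend d c hc f r (o + j * (n + 1))) := by
    by_contra hcon
    push_neg at hcon
    have hstrict : ∀ j, j ≤ d →
        mval d (pend d c hc f r (o + (j + 1) * (n + 1))) <
        mval d (pend d c hc f r (o + j * (n + 1))) := by
      intro j hj
      refine lt_of_le_of_ne ?_ (hcon j hj)
      refine hmono _ _ (Nat.mul_le_mul_right _ (by omega)) ?_
      rw [hL]
      exact Nat.mul_le_mul_right _ (by omega)
    have hchain : ∀ j, j ≤ d + 1 →
        mval d (pend d c hc f r (o + j * (n + 1))) + j ≤
        mval d (pend d c hc f r (o + 0 * (n + 1))) := by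
      intro j hj
      induction j with
      | zero => omega
      | succ j ih =>
        have h1 := hstrict j (by omega)
        have h2 := ih (by omega)
        omega
    have h0 : mval d (pend d c hc f r (o + 0 * (n + 1))) ≤ d :=
      mval_le_d_of_ne_none d (H (0 * (n + 1)) (by rw [Nat.zero_mul]; exact Nat.zero_le _))
    have := hchain (d + 1) (le_refl _)
    omega
  obtain ⟨j, hjd, hjeq⟩ := hsample
  set a := o + j * (n + 1) with ha
  have haL : j * (n + 1) + (n + 1) ≤ L := by
    have h1 : (j + 1) * (n + 1) ≤ (d + 1) * (n + 1) := Nat.mul_le_mul_right _ (by omega)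
    have h2 : (j + 1) * (n + 1) = j * (n + 1) + (n + 1) := by ring
    rw [hL]
    omega
  -- constancy on [a, a + n + 1]
  have hconst0 : ∀ u, a ≤ u → u ≤ a + (n + 1) → pend d c hc f r u = pend d c hc f r a := by
    intro u hu1 hu2
    obtain ⟨i, rfl⟩ : ∃ i, u = o + (j * (n + 1) + i) := ⟨u - a, by omega⟩
    refine mval_inj ?_
    rw [ha]
    have hup : mval d (pend d c hc f r (o + (j * (n + 1) + i))) ≤
        mval d (pend d c hc f r (o + j * (n + 1))) :=
      hmono _ _ (by omega) (by omega)
    have hdn : mval d (pend d c hc f r (o + (j + 1) * (n + 1))) ≤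
        mval d (pend d c hc f r (o + (j * (n + 1) + i))) := by
      refine hmono _ _ ?_ ?_
      · have h2 : (j + 1) * (n + 1) = j * (n + 1) + (n + 1) := by ring
        omega
      · rw [hL]
        exact Nat.mul_le_mul_right _ (by omega)
    rw [hjeq] at hdn
    exact le_antisymm hup hdn
  obtain ⟨p, hp⟩ := Option.ne_none_iff_exists'.mp (H (j * (n + 1)) (by omega))
  -- least start of the constant stretch
  have hQa : a ≤ a ∧ ∀ u, a ≤ u → u ≤ a → pend d c hc f r u = some p := by
    exact ⟨le_refl _, fun u h1 h2 => by rw [le_antisymm h2 h1]; exact hp⟩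
  have hexQ : ∃ s0, s0 ≤ a ∧ ∀ u, s0 ≤ u → u ≤ a → pend d c hc f r u = some p := ⟨a, hQa⟩
  set s0 := Nat.find hexQ with hs0
  obtain ⟨hs0a, hs0const⟩ := Nat.find_spec hexQ
  -- the full constant stretch
  have hconst : ∀ u, s0 ≤ u → u ≤ a + (n + 1) → pend d c hc f r u = some p := by
    intro u h1 h2
    rcases le_or_gt u a with h | h
    · exact hs0const u h1 h
    · rw [hconst0 u (by omega) h2]
      exact hp
  -- creation point
  have hcre : c (f (r + s0)) = (p : ℕ) := by
    rcases Nat.eq_zero_or_pos s0 with h0 | hpos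
    · have : pend d c hc f r 0 = some p := by
        rw [← h0]; exact hs0const s0 (le_refl _) hs0a
      have hfr : pstep d c hc none (f r) = some p := this
      have := pstep_change hc hfr (by simp)
      rw [h0, Nat.add_zero]
      exact this
    · obtain ⟨s1, hs1eq⟩ : ∃ s1, s0 = s1 + 1 := ⟨s0 - 1, by omega⟩
      have hs1 : ¬ (s1 ≤ a ∧ ∀ u, s1 ≤ u → u ≤ a → pend d c hc f r u = some p) :=
        Nat.find_min hexQ (by omega)
      push_neg at hs1
      have hne : pend d c hc f r s1 ≠ some p := by
        obtain ⟨u, hu1, hu2, hu3⟩ := hs1 (by omega)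
        rcases Nat.lt_or_ge u (s1 + 1) with h | h
        · obtain rfl : u = s1 := by omega
          exact hu3
        · exact absurd (hs0const u (by omega) hu2) hu3
      have hval : pend d c hc f r (s1 + 1) = some p :=
        hs0const (s1 + 1) (by omega) (by omega)
      rw [pend_succ] at hval
      have := pstep_change hc hval hne
      rw [hs1eq, show r + (s1 + 1) = r + s1 + 1 by omega]
      exact this
  have hodd : Odd (c (f (r + s0))) := by
    rw [hcre]
    have := p.2
    simp only [Finset.mem_filter, Finset.mem_range] at this
    exact this.2
  refine ⟨r + s0, by omega, by omega, hodd, ?_⟩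
  intro jj hjj1 hjj2
  have h1 : pend d c hc f r (s0 + jj) = some p := hconst _ (by omega) (by omega)
  obtain ⟨jj', rfl⟩ : ∃ jj', jj = jj' + 1 := ⟨jj - 1, by omega⟩
  have h2 : pend d c hc f r (s0 + jj') = some p := hconst _ (by omega) (by omega)
  have h3 : pstep d c hc (some p) (f (r + (s0 + jj') + 1)) = some p := by
    have h5 := h1
    rw [show s0 + (jj' + 1) = (s0 + jj') + 1 by omega, pend_succ, h2] at h5
    exact h5
  have h4 := pstep_const hc h3
  rw [show r + s0 + (jj' + 1) = r + (s0 + jj') + 1 by omega, hcre]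
  exact h4

/-! ### The phase lemma -/

lemma phase (n : ℕ) (e : Ordinal) :
    ∀ (P : PP A σ) (r o : ℕ), P.len = r + o →
    (P.f (r + o), pend d c hc P.f r o) ∉
      Yg d c hc A ((d + 1) * (n + 1)) (Zreg d c hc A) →
    mu d c hc A ((d + 1) * (n + 1)) (P.f (r + o), pend d c hc P.f r o) = e →
    ∃ (P' : PP A σ) (o' s : ℕ), PPExt A σ P P' ∧ P'.len = r + o' ∧ o < o' ∧
      P'.f (r + o') ∉ Zreg d c hc A ∧
      r ≤ s ∧ s + (n + 1) ≤ r + o' ∧ Odd (c (P'.f s)) ∧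
      ∀ jj, 1 ≤ jj → jj ≤ n + 1 →
        ¬ (Even (c (P'.f (s + jj))) ∧ c (P'.f (s + jj)) ≤ c (P'.f s)) := by
  induction e using Ordinal.induction with
  | h e IH =>
    intro P r o hlen hst hmu
    set N := (d + 1) * (n + 1) with hN
    have hav : (P.f (r + o), pend d c hc P.f r o) ∉
        AttrE PA N (Sb d c hc A N (mu d c hc A N (P.f (r + o), pend d c hc P.f r o))) :=
      mu_spec d c hc A hst
    obtain ⟨P', o', hext, hlen', hle, hres⟩ :=
      window d c hc A σ N _ N P r o hlen hav
    rcases hres with ⟨ho', hwin⟩ | ⟨ho', hout⟩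
    · -- completed window: extract witness
      obtain ⟨s, hs1, hs2, hs3, hs4⟩ := window_witness d c hc P'.f r o n
        (fun i hi => (hwin i hi).2)
      have hNpos : 0 < N := Nat.mul_pos (Nat.succ_pos d) (Nat.succ_pos n)
      have hs2' : s + (n + 1) ≤ r + o + N := by rw [hN]; exact hs2
      refine ⟨P', o', s, hext, hlen', by omega, ?_, hs1, by omega, hs3, hs4⟩
      intro hZ
      refine ((hwin N (le_refl _)).1) (Or.inr ?_)
      show P'.f (r + o + N) ∈ Zreg d c hc A
      rw [ho'] at hZ
      rw [show r + o + N = r + (o + N) by omega]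
      exact hZ
    · -- descent
      obtain ⟨hst', hlt⟩ := mu_descent d c hc A hout
      obtain ⟨P'', o'', s, hext', hlen'', ho'', hend, hw1, hw2, hw3, hw4⟩ :=
        IH _ (hmu ▸ hlt) P' r o' hlen' hst' rfl
      exact ⟨P'', o'', s, PPExt_trans A σ hext hext', hlen'', by omega, hend,
        hw1, hw2, hw3, hw4⟩


/-! ### Completeness -/

lemma distC_gt {π : ℕ → V} {k n : ℕ}
    (h : ∀ j, j ≤ n → ¬ (Even (c (π (k + j))) ∧ c (π (k + j)) ≤ c (π k))) :
    (n : ℕ∞) < distC π c k := by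
  have hmem : ∀ b ∈ (fun j : ℕ => (j : ℕ∞)) ''
      {j | Even (c (π (k + j))) ∧ c (π (k + j)) ≤ c (π k)},
      ((n : ℕ∞) + 1) ≤ b := by
    rintro b ⟨j, hj, rfl⟩
    have hjn : ¬ j ≤ n := fun hle => h j hle hj
    have hj' : n + 1 ≤ j := by omega
    show ((n + 1 : ℕ) : ℕ∞) ≤ ((j : ℕ) : ℕ∞)
    exact_mod_cast hj'
  refine lt_of_lt_of_le ?_ (le_sInf hmem)
  exact_mod_cast Nat.lt_succ_self n

theorem completeness {v : V} (hv : v ∈ WE A (FinParity c)) : v ∈ Zreg d c hc A := by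
  by_contra hvZ
  obtain ⟨σ, hwin⟩ := hv
  -- the initial partial play
  set P0 : PP A σ := ⟨0, fun _ => v, fun k hk => absurd hk (by omega),
    fun k hk _ => absurd hk (by omega)⟩ with hP0
  have h0end : P0.f P0.len ∉ Zreg d c hc A := hvZ
  -- one phase step
  have step : ∀ n (P : PP A σ), P.f P.len ∉ Zreg d c hc A →
      ∃ P' : PP A σ, PPExt A σ P P' ∧ P.len < P'.len ∧
        P'.f P'.len ∉ Zreg d c hc A ∧
        ∃ s, P.len ≤ s ∧ s + (n + 1) ≤ P'.len ∧ Odd (c (P'.f s)) ∧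
          ∀ jj, 1 ≤ jj → jj ≤ n + 1 →
            ¬ (Even (c (P'.f (s + jj))) ∧ c (P'.f (s + jj)) ≤ c (P'.f s)) := by
    intro n P hend
    have hYg : (P.f (P.len + 0), pend d c hc P.f P.len 0) ∉
        Yg d c hc A ((d + 1) * (n + 1)) (Zreg d c hc A) :=
      not_mem_Yg_of_not_Z d c hc A hend _
    obtain ⟨P', o', s, hext, hlen', ho', hend', hs1, hs2, hs3, hs4⟩ :=
      phase d c hc A σ n _ P P.len 0 rfl hYg rfl
    refine ⟨P', hext, by omega, ?_, s, hs1, by omega, hs3, hs4⟩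
    rw [hlen']
    exact hend'
  -- the sequence of stages
  let St : ℕ → {P : PP A σ // P.f P.len ∉ Zreg d c hc A} := fun n =>
    Nat.rec ⟨P0, h0end⟩
      (fun n prev => ⟨(step n prev.1 prev.2).choose,
        (step n prev.1 prev.2).choose_spec.2.2.1⟩) n
  have hSt : ∀ n, PPExt A σ (St n).1 (St (n + 1)).1 ∧ (St n).1.len < (St (n + 1)).1.len ∧
      ∃ s, (St n).1.len ≤ s ∧ s + (n + 1) ≤ (St (n + 1)).1.len ∧
        Odd (c ((St (n + 1)).1.f s)) ∧
        ∀ jj, 1 ≤ jj → jj ≤ n + 1 →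
          ¬ (Even (c ((St (n + 1)).1.f (s + jj))) ∧
            c ((St (n + 1)).1.f (s + jj)) ≤ c ((St (n + 1)).1.f s)) := by
    intro n
    have hspec := (step n (St n).1 (St n).2).choose_spec
    exact ⟨hspec.1, hspec.2.1, hspec.2.2.2⟩
  have hlenge : ∀ n, n ≤ (St n).1.len := by
    intro n
    induction n with
    | zero => omega
    | succ n ih => have := (hSt n).2.1; omega
  have hchain : ∀ m n, m ≤ n → PPExt A σ (St m).1 (St n).1 := by
    intro m n hmn
    induction n with
    | zero => obtain rfl : m = 0 := by omega
              exact PPExt_refl A σ _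
    | succ n ih =>
      rcases Nat.le_succ_iff.mp hmn with h | rfl
      · exact PPExt_trans A σ (ih h) (hSt n).1
      · exact PPExt_refl A σ _
  -- the limit play
  set π : ℕ → V := fun k => (St (k + 1)).1.f k with hπ
  have hπk : ∀ k, π k = (St (k + 1)).1.f k := fun k => rfl
  have agree : ∀ n k, k ≤ (St n).1.len → π k = (St n).1.f k := by
    intro n k hk
    rw [hπk k]
    rcases Nat.le_total n (k + 1) with h | h
    · exact (hchain n (k + 1) h).2 k hk
    · have hk' : k ≤ (St (k + 1)).1.len := le_trans (by omega) (hlenge (k + 1))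
      exact ((hchain (k + 1) n h).2 k hk').symm
  have hplay : IsPlay A π := by
    intro k
    have h1 : π k = (St (k + 2)).1.f k :=
      agree (k + 2) k (le_trans (by omega) (hlenge (k + 2)))
    have h2 : π (k + 1) = (St (k + 2)).1.f (k + 1) :=
      agree (k + 2) (k + 1) (le_trans (by omega) (hlenge (k + 2)))
    rw [h1, h2]
    exact (St (k + 2)).1.edges k (by have := hlenge (k + 2); omega)
  have hπ0 : π 0 = v := by
    have h1 : π 0 = (St 0).1.f 0 := agree 0 0 (by omega)
    rw [h1]
    rfl
  have hcons : EveConsistent A σ π := by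
    intro k he
    have h1 : π k = (St (k + 2)).1.f k :=
      agree (k + 2) k (le_trans (by omega) (hlenge (k + 2)))
    have h2 : π (k + 1) = (St (k + 2)).1.f (k + 1) :=
      agree (k + 2) (k + 1) (le_trans (by omega) (hlenge (k + 2)))
    have hh : hist π k = hist (St (k + 2)).1.f k :=
      hist_congr (fun u hu => agree (k + 2) u (le_trans (by omega)
        (hlenge (k + 2))))
    rw [h1, h2, hh]
    refine (St (k + 2)).1.cons k (by have := hlenge (k + 2); omega) ?_
    rw [← h1]
    exact he
  -- the play has unbounded distances
  have hbad : ∀ n : ℕ, ∃ s : ℕ, n ≤ s ∧ (n : ℕ∞) < distC π c s := by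
    intro n
    obtain ⟨s, hs1, hs2, hs3, hs4⟩ := (hSt n).2.2
    have hsle : ∀ u, u ≤ s + (n + 1) → π u = (St (n + 1)).1.f u :=
      fun u hu => agree (n + 1) u (by omega)
    refine ⟨s, le_trans (hlenge n) hs1, ?_⟩
    refine distC_gt c ?_
    intro j hj
    rcases Nat.eq_zero_or_pos j with rfl | hjpos
    · rw [Nat.add_zero, hsle s (by omega)]
      rintro ⟨hev, -⟩
      exact (Nat.not_odd_iff_even.mpr hev) hs3
    · have h4 := hs4 j (by omega) (by omega)
      rw [hsle (s + j) (by omega), hsle s (by omega)]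
      exact h4
  -- contradiction with the finitary parity condition
  have hfin : π ∈ FinParity c := hwin π hplay hπ0 hcons
  have hlt : Filter.limsup (fun k => distC π c k) Filter.atTop < ⊤ := hfin
  obtain ⟨n0, hn0⟩ : ∃ n0 : ℕ,
      Filter.limsup (fun k => distC π c k) Filter.atTop = (n0 : ℕ∞) := by
    rcases (WithTop.ne_top_iff_exists).mp (ne_of_lt hlt) with ⟨n0, hn0⟩
    exact ⟨n0, hn0.symm⟩
  have hev : ∀ᶠ k in Filter.atTop, distC π c k < ((n0 + 1 : ℕ) : ℕ∞) := by
    refine Filter.eventually_lt_of_limsup_lt ?_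
    rw [hn0]
    exact_mod_cast Nat.lt_succ_self n0
  rw [Filter.eventually_atTop] at hev
  obtain ⟨K, hK⟩ := hev
  obtain ⟨s, hs1, hs2⟩ := hbad (max K (n0 + 1))
  have h1 := hK s (le_trans (le_max_left _ _) hs1)
  have h2 : ((n0 + 1 : ℕ) : ℕ∞) ≤ ((max K (n0 + 1) : ℕ) : ℕ∞) := by
    exact_mod_cast le_max_right _ _
  exact absurd (lt_of_le_of_lt (le_trans h2 (le_of_lt hs2)) h1) (lt_irrefl _)

end WithColoring

end

end Stmt15Aux

open GameDefs in
/-- in finitary parity games, Eve has a winning strategy from her winning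
set using at most `ℓ + 1` memory states, where `ℓ` is the number of odd colors. -/
theorem stmt15 {V : Type} [Countable V] (A : Arena V) (d : ℕ) (c : V → ℕ)
    (hc : ∀ v, c v ≤ d) :
    ∃ Mem : Memory V, ∃ _ : Finite Mem.M, ∃ σ : EveMemStrategy A Mem,
      Nat.card Mem.M ≤ ((Finset.range (d + 1)).filter (fun m => Odd m)).card + 1 ∧
      ∀ v ∈ WE A (FinParity c), EveMemWinsFrom A Mem σ (FinParity c) v := by
  refine ⟨Stmt15Aux.MemS d c hc A, ?_, Stmt15Aux.stratS d c hc A, ?_, ?_⟩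
  · exact inferInstanceAs (Finite (Stmt15Aux.Mst d))
  · rw [show (Stmt15Aux.MemS d c hc A).M = Stmt15Aux.Mst d from rfl,
      Stmt15Aux.card_Mst d]
  · intro v hv
    exact Stmt15Aux.soundness d c hc A (Stmt15Aux.completeness d c hc A hv)
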